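/- (Remark: CAFs and rIAFs are equally expressive.) For every control AF there is a rich incomplete AF whose set of completions equals the set of completions of the CAF; and conversely, for every rich incomplete AF there is a control AF whose set of completions equals the set of completions of the rIAF. -/
import Mathlib


noncomputable section

namespace DLPA

/-- Propositional variables: awareness, acceptance, attack, auxiliary acceptance
copies, plus countably many further auxiliary variables. -/
inductive PVar (U : Type) : Type
  | aw : U → PVar U
  | inn : U → PVar U
  | att : U → U → PVar U
  | inn' : U → PVar U
  | aux : Nat → PVar U

-- DL-PA formulas and programs, by mutual recursion.
mutual
  inductive Form (U : Type) : Type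
    | var : PVar U → Form U
    | neg : Form U → Form U
    | conj : Form U → Form U → Form U
    | box : Prog U → Form U → Form U
  inductive Prog (U : Type) : Type
    | add : PVar U → Prog U           -- +p
    | rem : PVar U → Prog U           -- −p
    | test : Form U → Prog U          -- φ?
    | seq : Prog U → Prog U → Prog U
    | choice : Prog U → Prog U → Prog U
    | conv : Prog U → Prog U
end

variable {U : Type}

/-- A valuation is a set of propositional variables. -/
abbrev Val (U : Type) := Set (PVar U)

-- Satisfaction of formulas and interpretation of programs, by mutual recursion.
mutual
  def Sat : Val U → Form U → Prop
    | v, Form.var p => p ∈ v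
    | v, Form.neg φ => ¬ Sat v φ
    | v, Form.conj φ ψ => Sat v φ ∧ Sat v ψ
    | v, Form.box π φ => ∀ w, Rel π v w → Sat w φ
  def Rel : Prog U → Val U → Val U → Prop
    | Prog.add p, v, w => w = v ∪ {p}
    | Prog.rem p, v, w => w = v \ {p}
    | Prog.test φ, v, w => w = v ∧ Sat v φ
    | Prog.seq π₁ π₂, v, w => ∃ u, Rel π₁ v u ∧ Rel π₂ u w
    | Prog.choice π₁ π₂, v, w => Rel π₁ v w ∨ Rel π₂ v w
    | Prog.conv π, v, w => Rel π w v
end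

def Form.falsum : Form U := Form.conj (Form.var (PVar.aux 0)) (Form.neg (Form.var (PVar.aux 0)))
def Form.top : Form U := Form.neg Form.falsum
def Form.impl (φ ψ : Form U) : Form U := Form.neg (Form.conj φ (Form.neg ψ))
def Form.disj (φ ψ : Form U) : Form U := Form.neg (Form.conj (Form.neg φ) (Form.neg ψ))
def Form.equiv (φ ψ : Form U) : Form U := Form.conj (Form.impl φ ψ) (Form.impl ψ φ)
def Form.dia (π : Prog U) (φ : Form U) : Form U := Form.neg (Form.box π (Form.neg φ))
def Prog.skip : Prog U := Prog.test Form.top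

/-- Sequential composition of a list of programs (`skip` for the empty list). -/
def seqList {β : Type} (f : β → Prog U) : List β → Prog U
  | [] => Prog.skip
  | p :: ps => Prog.seq (f p) (seqList f ps)

/-- Nondeterministic composition of a list of programs (`skip` for the empty list). -/
def unionList {β : Type} (f : β → Prog U) : List β → Prog U
  | [] => Prog.skip
  | [p] => f p
  | p :: ps => Prog.choice (f p) (unionList f ps)

def mkTrueOne (L : List (PVar U)) : Prog U :=
  unionList (fun p => Prog.seq (Prog.test (Form.neg (Form.var p))) (Prog.add p)) L
def mkFalseOne (L : List (PVar U)) : Prog U :=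
  unionList (fun p => Prog.seq (Prog.test (Form.var p)) (Prog.rem p)) L
def mkTrueSome (L : List (PVar U)) : Prog U :=
  seqList (fun p => Prog.choice (Prog.add p) Prog.skip) L
def mkFalseSome (L : List (PVar U)) : Prog U :=
  seqList (fun p => Prog.choice (Prog.rem p) Prog.skip) L
def vary (L : List (PVar U)) : Prog U :=
  seqList (fun p => Prog.choice (Prog.add p) (Prog.rem p)) L
/-- dis(ATT_R): for each pair (x,y) in the list, make true att_{x,y} or att_{y,x}. -/
def dis (L : List (U × U)) : Prog U :=
  seqList (fun q => Prog.choice (Prog.add (PVar.att q.1 q.2)) (Prog.add (PVar.att q.2 q.1))) L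

def conjList : List (Form U) → Form U
  | [] => Form.top
  | φ :: φs => Form.conj φ (conjList φs)
def disjList : List (Form U) → Form U
  | [] => Form.falsum
  | φ :: φs => Form.disj φ (disjList φs)

/-- The elements of a finite universe in a fixed order. -/
def enum (U : Type) [Fintype U] : List U := Finset.univ.toList

def bigConj [Fintype U] (f : U → Form U) : Form U := conjList ((enum U).map f)
def bigDisj [Fintype U] (f : U → Form U) : Form U := disjList ((enum U).map f)

def INlist (U : Type) [Fintype U] : List (PVar U) := (enum U).map PVar.inn

/-- copy(IN_U) copies the value of in_x to in'_x, for every x ∈ U. -/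
def copyIN (U : Type) [Fintype U] : Prog U :=
  seqList (fun x => Prog.choice
      (Prog.seq (Prog.test (Form.var (PVar.inn x))) (Prog.add (PVar.inn' x)))
      (Prog.seq (Prog.test (Form.neg (Form.var (PVar.inn x)))) (Prog.rem (PVar.inn' x))))
    (enum U)

def Well (U : Type) [Fintype U] : Form U :=
  bigConj (fun x => Form.impl (Form.var (PVar.inn x)) (Form.var (PVar.aw x)))

def ConFree (U : Type) [Fintype U] : Form U :=
  Form.conj (Well U) (bigConj fun x => bigConj fun y =>
    Form.neg (Form.conj (Form.var (PVar.inn x))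
      (Form.conj (Form.var (PVar.inn y)) (Form.var (PVar.att x y)))))

def AdmissibleF (U : Type) [Fintype U] : Form U :=
  Form.conj (ConFree U) (bigConj fun x => Form.impl (Form.var (PVar.inn x))
    (bigConj fun y => Form.impl (Form.conj (Form.var (PVar.aw y)) (Form.var (PVar.att y x)))
      (bigDisj fun z => Form.conj (Form.var (PVar.inn z)) (Form.var (PVar.att z y)))))

def StableF (U : Type) [Fintype U] : Form U :=
  Form.conj (Well U) (bigConj fun x => Form.impl (Form.var (PVar.aw x))
    (Form.equiv (Form.var (PVar.inn x))
      (Form.neg (bigDisj fun y => Form.conj (Form.var (PVar.inn y)) (Form.var (PVar.att y x))))))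

def CompleteF (U : Type) [Fintype U] : Form U :=
  Form.conj (ConFree U) (bigConj fun x => Form.equiv (Form.var (PVar.inn x))
    (bigConj fun y => Form.impl (Form.conj (Form.var (PVar.aw y)) (Form.var (PVar.att y x)))
      (bigDisj fun z => Form.conj (Form.var (PVar.inn z)) (Form.var (PVar.att z y)))))

def GroundedF (U : Type) [Fintype U] : Form U :=
  Form.conj (CompleteF U)
    (Form.box (Prog.seq (mkFalseOne (INlist U)) (mkFalseSome (INlist U))) (Form.neg (CompleteF U)))

def PreferredF (U : Type) [Fintype U] : Form U :=
  Form.conj (AdmissibleF U)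
    (Form.box (Prog.seq (mkTrueOne (INlist U)) (mkTrueSome (INlist U))) (Form.neg (AdmissibleF U)))

def NaiveF (U : Type) [Fintype U] : Form U :=
  Form.conj (ConFree U) (Form.box (mkTrueOne (INlist U)) (Form.neg (ConFree U)))

def IncludedInCp (U : Type) [Fintype U] : Form U :=
  bigConj fun x => Form.impl
    (Form.disj (Form.var (PVar.inn x)) (Form.conj (Form.var (PVar.aw x))
      (bigDisj fun y => Form.conj (Form.var (PVar.inn y)) (Form.var (PVar.att y x)))))
    (Form.disj (Form.var (PVar.inn' x)) (Form.conj (Form.var (PVar.aw x))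
      (bigDisj fun y => Form.conj (Form.var (PVar.inn' y)) (Form.var (PVar.att y x)))))

def IncludesCp (U : Type) [Fintype U] : Form U :=
  bigConj fun x => Form.impl
    (Form.disj (Form.var (PVar.inn' x)) (Form.conj (Form.var (PVar.aw x))
      (bigDisj fun y => Form.conj (Form.var (PVar.inn' y)) (Form.var (PVar.att y x)))))
    (Form.disj (Form.var (PVar.inn x)) (Form.conj (Form.var (PVar.aw x))
      (bigDisj fun y => Form.conj (Form.var (PVar.inn y)) (Form.var (PVar.att y x)))))

/-- makeExt^σ = vary(IN_U); φ_σ? -/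
def makeExt (U : Type) [Fintype U] (φ : Form U) : Prog U :=
  Prog.seq (vary (INlist U)) (Prog.test φ)

def SemiStableF (U : Type) [Fintype U] : Form U :=
  Form.conj (CompleteF U)
    (Form.box (Prog.seq (copyIN U) (makeExt U (CompleteF U)))
      (Form.impl (IncludesCp U) (IncludedInCp U)))

/-- A_v -/
def Av (v : Val U) : Set U := {x | PVar.aw x ∈ v}
/-- R_v -/
def Rv (v : Val U) : Set (U × U) := {q | q.1 ∈ Av v ∧ q.2 ∈ Av v ∧ PVar.att q.1 q.2 ∈ v}
/-- E(v) -/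
def Ev (v : Val U) : Set U := {x | PVar.inn x ∈ v}
/-- {x ∈ U : in'_x ∈ v} -/
def Cv (v : Val U) : Set U := {x | PVar.inn' x ∈ v}
/-- v_(A,R) = AW_A ∪ ATT_R -/
def valOf (A : Set U) (R : Set (U × U)) : Val U :=
  (PVar.aw '' A) ∪ ((fun q : U × U => PVar.att q.1 q.2) '' R)

/-- E⁺, the set of arguments of A attacked by E in (A,R). -/
def attacked (A : Set U) (R : Set (U × U)) (E : Set U) : Set U :=
  {x ∈ A | ∃ y ∈ E, (y, x) ∈ R}
/-- E⊕ = E ∪ E⁺, the range of E. -/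
def rangeOf (A : Set U) (R : Set (U × U)) (E : Set U) : Set U :=
  E ∪ attacked A R E

def IsConflictFree (A : Set U) (R : Set (U × U)) (E : Set U) : Prop :=
  E ⊆ A ∧ E ∩ attacked A R E = ∅
def Defends (A : Set U) (R : Set (U × U)) (E : Set U) (a : U) : Prop :=
  ∀ x ∈ A, (x, a) ∈ R → x ∈ attacked A R E
def IsAdmissibleExt (A : Set U) (R : Set (U × U)) (E : Set U) : Prop :=
  IsConflictFree A R E ∧ ∀ a ∈ E, Defends A R E a
def IsStableExt (A : Set U) (R : Set (U × U)) (E : Set U) : Prop :=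
  IsConflictFree A R E ∧ A \ E ⊆ attacked A R E
def IsCompleteExt (A : Set U) (R : Set (U × U)) (E : Set U) : Prop :=
  IsConflictFree A R E ∧ E = {a ∈ A | Defends A R E a}
def IsGroundedExt (A : Set U) (R : Set (U × U)) (E : Set U) : Prop :=
  IsCompleteExt A R E ∧ ∀ E', IsCompleteExt A R E' → E' ⊆ E → E' = E
def IsPreferredExt (A : Set U) (R : Set (U × U)) (E : Set U) : Prop :=
  IsCompleteExt A R E ∧ ∀ E', IsCompleteExt A R E' → E ⊆ E' → E' = E
def IsNaiveExt (A : Set U) (R : Set (U × U)) (E : Set U) : Prop :=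
  IsConflictFree A R E ∧ ∀ E', IsConflictFree A R E' → E ⊆ E' → E' = E
def IsSemiStableExt (A : Set U) (R : Set (U × U)) (E : Set U) : Prop :=
  IsCompleteExt A R E ∧ ¬ ∃ E', IsCompleteExt A R E' ∧ rangeOf A R E ⊂ rangeOf A R E'

end DLPA

end

noncomputable section
open DLPA

/-- The defining conditions of a rich incomplete AF (A^F, R^F, A^?, R^?, R^↔). -/
def RIAFConds {U : Type} (AF Aq : Set U) (RF Rq Rl : Set (U × U)) : Prop :=
  Disjoint AF Aq ∧ Disjoint RF Rq ∧ Disjoint RF Rl ∧ Disjoint Rq Rl ∧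
    RF ⊆ (AF ∪ Aq) ×ˢ (AF ∪ Aq) ∧ Rq ⊆ (AF ∪ Aq) ×ˢ (AF ∪ Aq) ∧
    Rl ⊆ (AF ∪ Aq) ×ˢ (AF ∪ Aq) ∧
    (∀ x y, (x, y) ∈ Rl → (y, x) ∈ Rl) ∧ (∀ x, (x, x) ∉ Rl)

/-- (A*, R*) is a completion of the rIAF (A^F, R^F, A^?, R^?, R^↔). -/
def IsCompletionOfRIAF {U : Type} (AF Aq : Set U) (RF Rq Rl : Set (U × U))
    (As : Set U) (Rs : Set (U × U)) : Prop :=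
  AF ⊆ As ∧ As ⊆ AF ∪ Aq ∧
    RF ∩ As ×ˢ As ⊆ Rs ∧ Rs ⊆ (RF ∪ Rq ∪ Rl) ∩ As ×ˢ As ∧
    ∀ x y, x ∈ As → y ∈ As → (x, y) ∈ Rl → ((x, y) ∈ Rs ∨ (y, x) ∈ Rs)

end

noncomputable section
open DLPA

/-- The defining conditions of a control AF (A^F, R^F, A^?, R^?, R^↔, A^C, R^C). -/
def CAFConds {U : Type} (AF Aq : Set U) (RF Rq Rl : Set (U × U))
    (AC : Set U) (RC : Set (U × U)) : Prop :=
  Disjoint AF Aq ∧ Disjoint AF AC ∧ Disjoint Aq AC ∧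
    RF ⊆ (AF ∪ Aq) ×ˢ (AF ∪ Aq) ∧ Rq ⊆ (AF ∪ Aq) ×ˢ (AF ∪ Aq) ∧
    Rl ⊆ (AF ∪ Aq) ×ˢ (AF ∪ Aq) ∧
    (∀ x y, (x, y) ∈ Rl → (y, x) ∈ Rl) ∧ (∀ x, (x, x) ∉ Rl) ∧
    RC ⊆ (AC ×ˢ (AF ∪ Aq ∪ AC)) ∪ ((AF ∪ Aq ∪ AC) ×ˢ AC) ∧
    Disjoint RF Rq ∧ Disjoint RF Rl ∧ Disjoint RF RC ∧
    Disjoint Rq Rl ∧ Disjoint Rq RC ∧ Disjoint Rl RC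

/-- (A*, R*) is a completion of the CAF (A^F, R^F, A^?, R^?, R^↔, A^C, R^C). -/
def IsCompletionOfCAF {U : Type} (AF Aq : Set U) (RF Rq Rl : Set (U × U))
    (AC : Set U) (RC : Set (U × U)) (As : Set U) (Rs : Set (U × U)) : Prop :=
  AF ∪ AC ⊆ As ∧ As ⊆ AF ∪ AC ∪ Aq ∧
    (RF ∪ RC) ∩ As ×ˢ As ⊆ Rs ∧ Rs ⊆ (RF ∪ RC ∪ Rq ∪ Rl) ∩ As ×ˢ As ∧
    ∀ x y, x ∈ As → y ∈ As → (x, y) ∈ Rl → ((x, y) ∈ Rs ∨ (y, x) ∈ Rs)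

end

open DLPA in
/-- CAFs and rIAFs are equally expressive. -/
theorem caf_riaf_equally_expressive
    (U : Type) [Fintype U] [Nonempty U] :
    (∀ (AF Aq : Set U) (RF Rq Rl : Set (U × U)) (AC : Set U) (RC : Set (U × U)),
        CAFConds AF Aq RF Rq Rl AC RC →
        ∃ (AF' Aq' : Set U) (RF' Rq' Rl' : Set (U × U)),
          RIAFConds AF' Aq' RF' Rq' Rl' ∧
          ∀ (As : Set U) (Rs : Set (U × U)),
            IsCompletionOfCAF AF Aq RF Rq Rl AC RC As Rs ↔
              IsCompletionOfRIAF AF' Aq' RF' Rq' Rl' As Rs) ∧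
    (∀ (AF Aq : Set U) (RF Rq Rl : Set (U × U)), RIAFConds AF Aq RF Rq Rl →
        ∃ (AF' Aq' : Set U) (RF' Rq' Rl' : Set (U × U)) (AC : Set U) (RC : Set (U × U)),
          CAFConds AF' Aq' RF' Rq' Rl' AC RC ∧
          ∀ (As : Set U) (Rs : Set (U × U)),
            IsCompletionOfRIAF AF Aq RF Rq Rl As Rs ↔
              IsCompletionOfCAF AF' Aq' RF' Rq' Rl' AC RC As Rs) := by
  constructor
  · intro AF Aq RF Rq Rl AC RC h
    obtain ⟨h1, h2, h3, h4, h5, h6, h7, h8, h9, h10, h11, h12, h13, h14, h15⟩ := h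
    refine ⟨AF ∪ AC, Aq, RF ∪ RC, Rq, Rl, ?_, ?_⟩
    · have hS : ((AF ∪ AC) ∪ Aq) = AF ∪ Aq ∪ AC := by
        rw [Set.union_right_comm]
      refine ⟨h1.union_left h3.symm, h10.union_left h14.symm, h11.union_left h15.symm, h13,
        ?_, ?_, ?_, h7, h8⟩
      · rw [hS]
        rintro ⟨x, y⟩ (hq | hq)
        · have := h4 hq
          exact ⟨Set.mem_union_left _ this.1, Set.mem_union_left _ this.2⟩
        · have := h9 hq
          rcases this with ⟨hx, hy⟩ | ⟨hx, hy⟩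
          · exact ⟨Set.mem_union_right _ hx, hy⟩
          · exact ⟨hx, Set.mem_union_right _ hy⟩
      · intro q hq
        have hsub : AF ∪ Aq ⊆ (AF ∪ AC) ∪ Aq := by
          rw [Set.union_right_comm]; exact Set.subset_union_left
        have := h5 hq
        exact ⟨hsub this.1, hsub this.2⟩
      · intro q hq
        have hsub : AF ∪ Aq ⊆ (AF ∪ AC) ∪ Aq := by
          rw [Set.union_right_comm]; exact Set.subset_union_left
        have := h6 hq
        exact ⟨hsub this.1, hsub this.2⟩
    · intro As Rs
      exact Iff.rfl
  · intro AF Aq RF Rq Rl h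
    obtain ⟨h1, h2, h3, h4, h5, h6, h7, h8, h9⟩ := h
    refine ⟨AF, Aq, RF, Rq, Rl, ∅, ∅, ?_, ?_⟩
    · exact ⟨h1, Set.disjoint_empty _, Set.disjoint_empty _, h5, h6, h7, h8, h9,
        (Set.empty_subset _), h2, h3, Set.disjoint_empty _, h4, Set.disjoint_empty _,
        Set.disjoint_empty _⟩
    · intro As Rs
      unfold IsCompletionOfRIAF IsCompletionOfCAF
      simp [Set.union_empty]
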